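/- The iteration of T_P from the bottom interpretation stabilizes after finitely many steps: letting ⊥ be the interpretation mapping every atom to v_0, the interpretation T_P^[Fintype.card A · n](⊥) (the (card A · n)-fold iterate of T_P applied to ⊥) is a fixed point of T_P and equals the least fixed point of T_P. -/

import Mathlib

/-! The iterates of the monotone operator `T_P` from the bottom interpretation form an increasing
chain. Until the chain becomes stationary each step raises the total truth degree
`∑ a, f a ∈ {0, …, card A · n}` by at least one, so after `card A · n` steps it has reached a
fixed point; and an induction with monotonicity bounds every iterate by any fixed point. -/

namespace FLLP

def CL {n : ℕ} (x y : Fin (n+1)) : Fin (n+1) :=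
  ⟨x.val + y.val - n, by have := x.isLt; have := y.isLt; omega⟩

def RL {n : ℕ} (j i : Fin (n+1)) : Fin (n+1) :=
  if h : i ≤ j then ⟨n, n.lt_succ_self⟩
  else ⟨n + j.val - i.val, by
    have h' : j.val < i.val := Fin.lt_def.mp (lt_of_not_ge h)
    have := i.isLt; omega⟩

def RG {n : ℕ} (j i : Fin (n+1)) : Fin (n+1) :=
  if i ≤ j then ⟨n, n.lt_succ_self⟩ else j

inductive Body (A H : Type) : Type where
  | atom : A → Body A H
  | andG : Body A H → Body A H → Body A H
  | andL : Body A H → Body A H → Body A H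
  | or   : Body A H → Body A H → Body A H
  | hedge : H → Body A H → Body A H
  deriving DecidableEq

def eval {n : ℕ} {A H : Type} (hinv : H → Fin (n+1) → Fin (n+1))
    (f : A → Fin (n+1)) : Body A H → Fin (n+1)
  | .atom a => f a
  | .andG B₁ B₂ => min (eval hinv f B₁) (eval hinv f B₂)
  | .andL B₁ B₂ => CL (eval hinv f B₁) (eval hinv f B₂)
  | .or B₁ B₂ => max (eval hinv f B₁) (eval hinv f B₂)
  | .hedge h B => hinv h (eval hinv f B)

inductive Imp : Type where
  | luka : Imp
  | godel : Imp
  deriving DecidableEq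

def tnorm {n : ℕ} : Imp → Fin (n+1) → Fin (n+1) → Fin (n+1)
  | .luka => CL
  | .godel => min

def implicator {n : ℕ} : Imp → Fin (n+1) → Fin (n+1) → Fin (n+1)
  | .luka => RL
  | .godel => RG

structure Program (n : ℕ) (A H : Type) [DecidableEq A] [DecidableEq H] : Type where
  rules : Finset (A × Body A H × Fin (n+1) × Imp)
  facts : Finset (A × Fin (n+1))

noncomputable def TP {n : ℕ} {A H : Type} [DecidableEq A] [DecidableEq H]
    (P : Program n A H) (hinv : H → Fin (n+1) → Fin (n+1))
    (f : A → Fin (n+1)) : A → Fin (n+1) := fun a =>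
  max ((P.rules.filter (fun R => R.1 = a)).sup
        (fun R => tnorm R.2.2.2 (eval hinv f R.2.1) R.2.2.1))
      ((P.facts.filter (fun F => F.1 = a)).sup (fun F => F.2))

def isModel {n : ℕ} {A H : Type} [DecidableEq A] [DecidableEq H]
    (P : Program n A H) (hinv : H → Fin (n+1) → Fin (n+1))
    (f : A → Fin (n+1)) : Prop :=
  (∀ R ∈ P.rules, R.2.2.1 ≤ implicator R.2.2.2 (f R.1) (eval hinv f R.2.1)) ∧
  (∀ F ∈ P.facts, F.2 ≤ f F.1)

section IterateFixedPoint

open Function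

variable {α : Type*} [PartialOrder α] {f : α → α} {x : α}

theorem iterate_le_of_isFixedPt (hf : Monotone f) {g : α} (hg : IsFixedPt f g) (hx : x ≤ g)
    (k : ℕ) : f^[k] x ≤ g := by
  simpa only [iterate_fixed hg.eq k] using hf.iterate k hx

theorem le_rank_iterate_of_not_isFixedPt (hf : Monotone f) (hx : x ≤ f x) {r : α → ℕ}
    (hr : StrictMono r) {N : ℕ} (hN : ¬IsFixedPt f (f^[N] x)) :
    ∀ k ≤ N + 1, k ≤ r (f^[k] x) := by
  intro k hk
  induction k with
  | zero => exact Nat.zero_le _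
  | succ k ih =>
    have hle : f^[k] x ≤ f^[k + 1] x := hf.monotone_iterate_of_le_map hx k.le_succ
    -- once the chain repeats a value it is constant, so `f^[N] x` would be fixed
    have hne : f^[k] x ≠ f^[k + 1] x := by
      intro heq
      have hfix : f (f^[k] x) = f^[k] x := by
        rw [← iterate_succ_apply' f k x]; exact heq.symm
      apply hN
      obtain ⟨m, rfl⟩ := Nat.exists_eq_add_of_le (Nat.le_of_succ_le_succ hk)
      rw [IsFixedPt, Nat.add_comm, iterate_add_apply, iterate_fixed hfix]
      exact hfix
    have := hr (lt_of_le_of_ne hle hne)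
    omega

theorem isFixedPt_iterate_of_rank_le (hf : Monotone f) (hx : x ≤ f x) {r : α → ℕ}
    (hr : StrictMono r) {N : ℕ} (hN : ∀ y, r y ≤ N) : IsFixedPt f (f^[N] x) := by
  by_contra hfix
  have := le_rank_iterate_of_not_isFixedPt hf hx hr hfix (N + 1) le_rfl
  have := hN (f^[N + 1] x)
  omega

end IterateFixedPoint

section TruthDegree

variable {n : ℕ} {A : Type} [Fintype A]

theorem strictMono_sum_val : StrictMono fun f : A → Fin (n + 1) => ∑ a, (f a : ℕ) := by
  intro f g hfg
  obtain ⟨hle, a, hlt⟩ := Pi.lt_def.mp hfg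
  exact Finset.sum_lt_sum (fun b _ => hle b) ⟨a, Finset.mem_univ a, hlt⟩

theorem sum_val_le_card_mul (f : A → Fin (n + 1)) : ∑ a, (f a : ℕ) ≤ Fintype.card A * n := by
  simpa using Finset.sum_le_card_nsmul Finset.univ (fun a => (f a : ℕ)) n
    (fun a _ => (f a).is_le)

end TruthDegree

theorem CL_mono {n : ℕ} {x x' y y' : Fin (n + 1)} (hx : x ≤ x') (hy : y ≤ y') :
    CL x y ≤ CL x' y' := by
  simp only [CL, Fin.le_def] at *
  omega

theorem tnorm_le_tnorm {n : ℕ} (i : Imp) {x x' : Fin (n + 1)} (hx : x ≤ x') (r : Fin (n + 1)) :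
    tnorm i x r ≤ tnorm i x' r := by
  cases i with
  | luka => exact CL_mono hx le_rfl
  | godel => exact min_le_min hx le_rfl

theorem eval_mono {n : ℕ} {A H : Type} {hinv : H → Fin (n + 1) → Fin (n + 1)}
    (hmono : ∀ h, Monotone (hinv h)) {f g : A → Fin (n + 1)} (hfg : f ≤ g) (B : Body A H) :
    eval hinv f B ≤ eval hinv g B := by
  induction B with
  | atom a => exact hfg a
  | andG B₁ B₂ ih₁ ih₂ => exact min_le_min ih₁ ih₂
  | andL B₁ B₂ ih₁ ih₂ => exact CL_mono ih₁ ih₂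
  | or B₁ B₂ ih₁ ih₂ => exact max_le_max ih₁ ih₂
  | hedge h B ih => exact hmono h ih

theorem TP_monotone {n : ℕ} {A H : Type} [DecidableEq A] [DecidableEq H] (P : Program n A H)
    {hinv : H → Fin (n + 1) → Fin (n + 1)} (hmono : ∀ h, Monotone (hinv h)) :
    Monotone (TP P hinv) := fun _ _ hfg _ =>
  max_le_max (Finset.sup_mono_fun fun R _ => tnorm_le_tnorm _ (eval_mono hmono hfg R.2.1) _)
    le_rfl

theorem TP_iterate_card_mul_n_general (n : ℕ) (A H : Type) [Fintype A]
    [DecidableEq A] [DecidableEq H]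
    (hinv : H → Fin (n+1) → Fin (n+1)) (hmono : ∀ h, Monotone (hinv h))
    (P : Program n A H) :
    TP P hinv ((TP P hinv)^[Fintype.card A * n] (fun _ => 0)) =
      (TP P hinv)^[Fintype.card A * n] (fun _ => 0) ∧
    ∀ g : A → Fin (n+1), TP P hinv g = g →
      ∀ a, (TP P hinv)^[Fintype.card A * n] (fun _ => 0) a ≤ g a := by
  have hT := TP_monotone P hmono
  have hbot : ∀ g : A → Fin (n + 1), (fun _ => 0) ≤ g := fun g a => Fin.zero_le (g a)
  exact ⟨isFixedPt_iterate_of_rank_le hT (hbot _) strictMono_sum_val sum_val_le_card_mul,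
    fun g hg => iterate_le_of_isFixedPt hT hg (hbot g) _⟩

theorem TP_iterate_card_mul_n (n : ℕ) (hn : 1 ≤ n) (A H : Type) [Fintype A] [Fintype H]
    [DecidableEq A] [DecidableEq H]
    (hinv : H → Fin (n+1) → Fin (n+1)) (hmono : ∀ h, Monotone (hinv h))
    (P : Program n A H) :
    TP P hinv ((TP P hinv)^[Fintype.card A * n] (fun _ => 0)) =
      (TP P hinv)^[Fintype.card A * n] (fun _ => 0) ∧
    ∀ g : A → Fin (n+1), TP P hinv g = g →
      ∀ a, (TP P hinv)^[Fintype.card A * n] (fun _ => 0) a ≤ g a :=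
  TP_iterate_card_mul_n_general n A H hinv hmono P

end FLLP
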